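/- (Ghosh's lemma) Let (V_n) and (W_n) be sequences of random variables such that: (a) for every δ > 0 there exists ε > 0 with P(|W_n| > ε) < δ for all n (i.e. (W_n) is tight), and (b) for every y ∈ ℝ and every ε > 0, P(V_n ≤ y, W_n ≥ y + ε) → 0 and P(V_n ≥ y + ε, W_n ≤ y) → 0 as n → ∞. Then V_n − W_n → 0 in probability. -/

import Mathlib

open MeasureTheory Filter

theorem stmt6 {Ω : Type*} [MeasurableSpace Ω] (μ : Measure Ω) [IsProbabilityMeasure μ]
    (V W : ℕ → Ω → ℝ) (hV : ∀ n, Measurable (V n)) (hW : ∀ n, Measurable (W n))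
    (ha : ∀ δ > (0 : ℝ), ∃ ε > (0 : ℝ), ∀ n, μ {ω | ε < |W n ω|} < ENNReal.ofReal δ)
    (hb : ∀ (y : ℝ), ∀ ε > (0 : ℝ),
      Tendsto (fun n => μ {ω | V n ω ≤ y ∧ y + ε ≤ W n ω}) atTop (nhds 0) ∧
      Tendsto (fun n => μ {ω | y + ε ≤ V n ω ∧ W n ω ≤ y}) atTop (nhds 0)) :
    TendstoInMeasure μ (fun n ω => V n ω - W n ω) atTop (fun _ => (0 : ℝ)) := by
  rw [tendstoInMeasure_iff_dist]
  intro ε hε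
  have main : ∀ δ : ℝ, 0 < δ → ∀ᶠ n in atTop,
      μ {ω | ε ≤ dist (V n ω - W n ω) 0} ≤ ENNReal.ofReal δ := by
    intro δ hδ
    obtain ⟨M, hM, hMb⟩ := ha (δ/2) (by positivity)
    set k : ℕ := ⌈(4*M)/ε⌉₊ with hk
    have hk1 : 1 ≤ k := Nat.one_le_ceil_iff.mpr (by positivity)
    have hkM : 2*M ≤ (k:ℝ) * (ε/2) := by
      have h1 := Nat.le_ceil ((4*M)/ε)
      rw [div_le_iff₀ (by positivity)] at h1
      nlinarith
    have hsum : Tendsto (fun n => ∑ j ∈ Finset.range k,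
        (μ {ω | (-M + ((j:ℝ)+1)*(ε/2)) + ε/2 ≤ V n ω ∧ W n ω ≤ -M + ((j:ℝ)+1)*(ε/2)}
          + μ {ω | V n ω ≤ (-M + ((j:ℝ)+1)*(ε/2)) - ε ∧
              ((-M + ((j:ℝ)+1)*(ε/2)) - ε) + ε/2 ≤ W n ω})) atTop (nhds 0) := by
      have h0 : (0:ENNReal) = ∑ j ∈ Finset.range k, (0 + 0 : ENNReal) := by simp
      rw [h0]
      exact tendsto_finset_sum _ fun j _ =>
        ((hb (-M + ((j:ℝ)+1)*(ε/2)) (ε/2) (by positivity)).2.add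
          (hb ((-M + ((j:ℝ)+1)*(ε/2)) - ε) (ε/2) (by positivity)).1)
    have hev : ∀ᶠ n in atTop, (∑ j ∈ Finset.range k,
        (μ {ω | (-M + ((j:ℝ)+1)*(ε/2)) + ε/2 ≤ V n ω ∧ W n ω ≤ -M + ((j:ℝ)+1)*(ε/2)}
          + μ {ω | V n ω ≤ (-M + ((j:ℝ)+1)*(ε/2)) - ε ∧
              ((-M + ((j:ℝ)+1)*(ε/2)) - ε) + ε/2 ≤ W n ω})) < ENNReal.ofReal (δ/2) :=
      hsum.eventually_lt_const (by simp [ENNReal.ofReal_pos]; positivity)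
    filter_upwards [hev] with n hn
    have incl : {ω | ε ≤ dist (V n ω - W n ω) 0} ⊆ {ω | M < |W n ω|} ∪
        ⋃ j ∈ Finset.range k,
          ({ω | (-M + ((j:ℝ)+1)*(ε/2)) + ε/2 ≤ V n ω ∧ W n ω ≤ -M + ((j:ℝ)+1)*(ε/2)}
            ∪ {ω | V n ω ≤ (-M + ((j:ℝ)+1)*(ε/2)) - ε ∧
                ((-M + ((j:ℝ)+1)*(ε/2)) - ε) + ε/2 ≤ W n ω}) := by
      intro ω hω
      simp only [Set.mem_setOf_eq, Real.dist_eq, sub_zero] at hω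
      by_cases hMw : M < |W n ω|
      · exact Or.inl hMw
      · push_neg at hMw
        obtain ⟨hw1, hw2⟩ := abs_le.mp hMw
        set j : ℕ := min (k-1) ⌊(W n ω + M)/(ε/2)⌋₊ with hj
        have hjk : j < k := by
          have := min_le_left (k-1) ⌊(W n ω + M)/(ε/2)⌋₊
          omega
        have hyl : -M + (j:ℝ)*(ε/2) ≤ W n ω := by
          have h1 : (j:ℝ) ≤ (W n ω + M)/(ε/2) := by
            calc (j:ℝ) ≤ (⌊(W n ω + M)/(ε/2)⌋₊ : ℝ) := by
                  exact_mod_cast min_le_right (k-1) _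
              _ ≤ (W n ω + M)/(ε/2) := Nat.floor_le (by
                  apply div_nonneg (by linarith) (by positivity))
          have h2 : (j:ℝ)*(ε/2) ≤ W n ω + M := by
            rw [← le_div_iff₀ (by positivity : (0:ℝ) < ε/2)]; exact h1
          linarith
        have hyr : W n ω ≤ -M + ((j:ℝ)+1)*(ε/2) := by
          rcases le_or_gt ⌊(W n ω + M)/(ε/2)⌋₊ (k-1) with h | h
          · have hje : j = ⌊(W n ω + M)/(ε/2)⌋₊ := min_eq_right h
            have h3 : (W n ω + M)/(ε/2) < (j:ℝ) + 1 := by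
              rw [hje]; exact Nat.lt_floor_add_one _
            have h4 : W n ω + M < ((j:ℝ)+1)*(ε/2) := by
              rw [← div_lt_iff₀ (by positivity : (0:ℝ) < ε/2)]; exact h3
            linarith
          · have hje : j = k - 1 := min_eq_left h.le
            have hjc : ((j:ℝ)+1) = (k:ℝ) := by
              rw [hje]; push_cast [Nat.cast_sub hk1]; ring
            rw [hjc]; linarith
        rcases le_abs.mp hω with h | h
        · refine Or.inr ?_
          simp only [Set.mem_iUnion, Finset.mem_range, Set.mem_union, Set.mem_setOf_eq]
          exact ⟨j, hjk, Or.inl ⟨by linarith, hyr⟩⟩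
        · refine Or.inr ?_
          simp only [Set.mem_iUnion, Finset.mem_range, Set.mem_union, Set.mem_setOf_eq]
          exact ⟨j, hjk, Or.inr ⟨by linarith, by linarith⟩⟩
    calc μ {ω | ε ≤ dist (V n ω - W n ω) 0} ≤ μ ({ω | M < |W n ω|} ∪
        ⋃ j ∈ Finset.range k,
          ({ω | (-M + ((j:ℝ)+1)*(ε/2)) + ε/2 ≤ V n ω ∧ W n ω ≤ -M + ((j:ℝ)+1)*(ε/2)}
            ∪ {ω | V n ω ≤ (-M + ((j:ℝ)+1)*(ε/2)) - ε ∧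
                ((-M + ((j:ℝ)+1)*(ε/2)) - ε) + ε/2 ≤ W n ω})) := measure_mono incl
      _ ≤ μ {ω | M < |W n ω|} + μ (⋃ j ∈ Finset.range k,
          ({ω | (-M + ((j:ℝ)+1)*(ε/2)) + ε/2 ≤ V n ω ∧ W n ω ≤ -M + ((j:ℝ)+1)*(ε/2)}
            ∪ {ω | V n ω ≤ (-M + ((j:ℝ)+1)*(ε/2)) - ε ∧
                ((-M + ((j:ℝ)+1)*(ε/2)) - ε) + ε/2 ≤ W n ω})) := measure_union_le _ _
      _ ≤ μ {ω | M < |W n ω|} + ∑ j ∈ Finset.range k,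
          μ ({ω | (-M + ((j:ℝ)+1)*(ε/2)) + ε/2 ≤ V n ω ∧ W n ω ≤ -M + ((j:ℝ)+1)*(ε/2)}
            ∪ {ω | V n ω ≤ (-M + ((j:ℝ)+1)*(ε/2)) - ε ∧
                ((-M + ((j:ℝ)+1)*(ε/2)) - ε) + ε/2 ≤ W n ω}) := by
          gcongr
          exact measure_biUnion_finset_le _ _
      _ ≤ μ {ω | M < |W n ω|} + ∑ j ∈ Finset.range k,
          (μ {ω | (-M + ((j:ℝ)+1)*(ε/2)) + ε/2 ≤ V n ω ∧ W n ω ≤ -M + ((j:ℝ)+1)*(ε/2)}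
            + μ {ω | V n ω ≤ (-M + ((j:ℝ)+1)*(ε/2)) - ε ∧
                ((-M + ((j:ℝ)+1)*(ε/2)) - ε) + ε/2 ≤ W n ω}) := by
          gcongr with j hjs
          exact measure_union_le _ _
      _ ≤ ENNReal.ofReal (δ/2) + ENNReal.ofReal (δ/2) := by
          exact add_le_add (hMb n).le hn.le
      _ = ENNReal.ofReal δ := by
          rw [← ENNReal.ofReal_add (by positivity) (by positivity)]
          norm_num
  rw [ENNReal.tendsto_atTop_zero]
  intro η hη
  have hne : min 1 η ≠ 0 := (lt_min one_pos hη).ne'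
  have hnt : min 1 η ≠ ⊤ := ne_top_of_le_ne_top ENNReal.one_ne_top (min_le_left _ _)
  have hδ : (0:ℝ) < (min 1 η).toReal := ENNReal.toReal_pos hne hnt
  obtain ⟨N, hN⟩ := eventually_atTop.mp (main _ hδ)
  refine ⟨N, fun n hn => (hN n hn).trans ?_⟩
  rw [ENNReal.ofReal_toReal hnt]
  exact min_le_right _ _
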